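/- arXiv:2506.22070 — 2 statements merged into one kernel-verified Lean document; each statement's English description precedes it below -/
import Mathlib

section
/- Let a, c, d, k, m, p, q, r be positive real numbers with cp > mq, set λ = m/(cp − mq), and assume r > d + aλ. Then there exists a unique pair (u, v) of positive real numbers satisfying r/(1 + k·v) − d − a·u − p·v/(1 + q·u + v) = 0 and −m + c·p·u/(1 + q·u + v) = 0; moreover this pair satisfies u = λ·v + λ. -/
/-!
The predator equation is linear in `u` once cleared of denominators: it says exactly
`u = λ (1 + v)`. Substituting this into the prey equation leaves one equation `F v = 0`
in `v` alone, where `F` is a strictly decreasing continuous function on `[0, ∞)` with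
`F 0 = r - d - a λ > 0` that eventually becomes negative; the intermediate value theorem
and strict monotonicity give exactly one positive root.
-/

open Set

/-- The prey equation restricted to the predator nullcline `u = λ (1 + v)`,
`λ = m / (c p - m q)`. -/
noncomputable def reducedPrey (a c d k m p q r v : ℝ) : ℝ :=
  r / (1 + k * v) - d - a * (m / (c * p - m * q) * (1 + v))
    - (c * p - m * q) / c * (v / (1 + v))

theorem StrictAntiOn.existsUnique_pos_eq_zero {F : ℝ → ℝ} (hanti : StrictAntiOn F (Ici 0))
    (hcont : ContinuousOn F (Ici 0)) (h0 : 0 < F 0) {b : ℝ} (hb : 0 ≤ b) (hFb : F b < 0) :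
    ∃! v, 0 < v ∧ F v = 0 := by
  obtain ⟨v, ⟨hv0, -⟩, hFv⟩ : ∃ v ∈ Icc 0 b, F v = 0 :=
    intermediate_value_Icc' hb (hcont.mono Icc_subset_Ici_self) ⟨hFb.le, h0.le⟩
  have hv : 0 < v := hv0.lt_of_ne (by rintro rfl; exact h0.ne' hFv)
  refine ⟨v, ⟨hv, hFv⟩, fun w ⟨hw, hFw⟩ => ?_⟩
  exact hanti.injOn (mem_Ici.2 hw.le) (mem_Ici.2 hv.le) (hFw.trans hFv.symm)

section Equilibrium

variable {a c d k m p q r u v : ℝ}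

theorem predator_eq_zero_iff (hs : m * q < c * p) (hD : 0 < 1 + q * u + v) :
    -m + c * p * u / (1 + q * u + v) = 0 ↔ u = m / (c * p - m * q) * (1 + v) := by
  have hs' : c * p - m * q ≠ 0 := sub_ne_zero.2 hs.ne'
  rw [neg_add_eq_zero, eq_div_iff hD.ne', div_mul_eq_mul_div, eq_div_iff hs']
  constructor <;> intro h <;> linear_combination -h

theorem prey_eq_on_nullcline (hc : c ≠ 0) (hp : p ≠ 0) (hs : m * q < c * p) (hv : 1 + v ≠ 0) :
    r / (1 + k * v) - d - a * (m / (c * p - m * q) * (1 + v))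
      - p * v / (1 + q * (m / (c * p - m * q) * (1 + v)) + v) = reducedPrey a c d k m p q r v := by
  have hs' : c * p - m * q ≠ 0 := sub_ne_zero.2 hs.ne'
  have hden : 1 + q * (m / (c * p - m * q) * (1 + v)) + v = c * p * (1 + v) / (c * p - m * q) := by
    rw [eq_div_iff hs']
    linear_combination q * (1 + v) * div_mul_cancel₀ m hs'
  rw [hden, reducedPrey]
  field_simp

theorem reducedPrey_strictAntiOn (hr : 0 ≤ r) (hk : 0 ≤ k) (ha : 0 ≤ a) (hm : 0 ≤ m)
    (hc : 0 < c) (hs : m * q < c * p) :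
    StrictAntiOn (reducedPrey a c d k m p q r) (Ici 0) := by
  intro x (hx : 0 ≤ x) y (hy : 0 ≤ y) hxy
  have hL : 0 ≤ a * (m / (c * p - m * q)) := mul_nonneg ha (div_nonneg hm (by linarith))
  have hB : 0 < (c * p - m * q) / c := div_pos (by linarith) hc
  have hfear : r / (1 + k * y) ≤ r / (1 + k * x) :=
    div_le_div_of_nonneg_left hr (by positivity) (by nlinarith)
  have hsat : x / (1 + x) < y / (1 + y) := by
    rw [div_lt_div_iff₀ (by positivity) (by positivity)]
    linarith
  have := mul_lt_mul_of_pos_left hsat hB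
  have := mul_le_mul_of_nonneg_left hxy.le hL
  simp only [reducedPrey]
  linarith

theorem reducedPrey_continuousOn (hk : 0 ≤ k) :
    ContinuousOn (reducedPrey a c d k m p q r) (Ici 0) := by
  unfold reducedPrey
  fun_prop (disch := intro x (hx : 0 ≤ x); positivity)

theorem reducedPrey_zero : reducedPrey a c d k m p q r 0 = r - d - a * (m / (c * p - m * q)) := by
  simp [reducedPrey]

theorem exists_reducedPrey_neg (hr : 0 ≤ r) (hk : 0 ≤ k) (ha : 0 < a) (hm : 0 < m) (hc : 0 < c)
    (hs : m * q < c * p) (hrd : d + a * (m / (c * p - m * q)) < r) :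
    ∃ v, 0 ≤ v ∧ reducedPrey a c d k m p q r v < 0 := by
  have hL : 0 < a * (m / (c * p - m * q)) := mul_pos ha (div_pos hm (by linarith))
  set v := (r - d) / (a * (m / (c * p - m * q)))
  have hv : 0 ≤ v := div_nonneg (by linarith) hL.le
  have hLv : a * (m / (c * p - m * q)) * v = r - d := mul_div_cancel₀ _ hL.ne'
  have hfear : r / (1 + k * v) ≤ r := div_le_self hr (by nlinarith)
  have hsat : 0 ≤ (c * p - m * q) / c * (v / (1 + v)) :=
    mul_nonneg (div_nonneg (by linarith) hc.le) (by positivity)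
  refine ⟨v, hv, ?_⟩
  simp only [reducedPrey]
  linarith

theorem isEquilibrium_iff (hc : c ≠ 0) (hp : p ≠ 0) (hq : 0 ≤ q) (hs : m * q < c * p)
    (hu : 0 < u) (hv : 0 < v) :
    (r / (1 + k * v) - d - a * u - p * v / (1 + q * u + v) = 0 ∧
        -m + c * p * u / (1 + q * u + v) = 0) ↔
      u = m / (c * p - m * q) * (1 + v) ∧ reducedPrey a c d k m p q r v = 0 := by
  have hD : 0 < 1 + q * u + v := by positivity
  have hv' : 1 + v ≠ 0 := by positivity
  rw [predator_eq_zero_iff hs hD]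
  constructor
  · rintro ⟨hprey, rfl⟩
    exact ⟨rfl, (prey_eq_on_nullcline hc hp hs hv').symm.trans hprey⟩
  · rintro ⟨rfl, hF⟩
    exact ⟨(prey_eq_on_nullcline hc hp hs hv').trans hF, rfl⟩

end Equilibrium

theorem stmt_0_general (a c d k m p q r : ℝ)
    (ha : 0 < a) (hc : 0 < c) (hk : 0 < k) (hm : 0 < m)
    (hp : 0 < p) (hq : 0 < q) (hr : 0 < r)
    (hcp : m * q < c * p)
    (hrd : d + a * (m / (c * p - m * q)) < r) :
    (∃! uv : ℝ × ℝ, 0 < uv.1 ∧ 0 < uv.2 ∧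
      r / (1 + k * uv.2) - d - a * uv.1 - p * uv.2 / (1 + q * uv.1 + uv.2) = 0 ∧
      -m + c * p * uv.1 / (1 + q * uv.1 + uv.2) = 0) ∧
    (∀ u v : ℝ, 0 < u → 0 < v →
      r / (1 + k * v) - d - a * u - p * v / (1 + q * u + v) = 0 →
      -m + c * p * u / (1 + q * u + v) = 0 →
      u = (m / (c * p - m * q)) * v + m / (c * p - m * q)) := by
  have hequil (u v : ℝ) (hu : 0 < u) (hv : 0 < v) :=
    isEquilibrium_iff (a := a) (d := d) (k := k) (r := r) hc.ne' hp.ne' hq.le hcp hu hv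
  obtain ⟨b, hb, hFb⟩ := exists_reducedPrey_neg hr.le hk.le ha hm hc hcp hrd
  obtain ⟨v, ⟨hv, hFv⟩, huniq⟩ :=
    (reducedPrey_strictAntiOn hr.le hk.le ha.le hm.le hc hcp).existsUnique_pos_eq_zero
      (reducedPrey_continuousOn hk.le) (by rw [reducedPrey_zero]; linarith) hb hFb
  have hu : 0 < m / (c * p - m * q) * (1 + v) := mul_pos (div_pos hm (by linarith)) (by linarith)
  refine ⟨⟨(_, v), ⟨hu, hv, (hequil _ _ hu hv).2 ⟨rfl, hFv⟩⟩, ?_⟩, ?_⟩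
  · rintro ⟨u', v'⟩ ⟨hu', hv', hsol⟩
    obtain ⟨rfl, hF'⟩ := (hequil u' v' hu' hv').1 hsol
    rw [huniq v' ⟨hv', hF'⟩]
  · intro u v hu hv hprey hpred
    rw [((hequil u v hu hv).1 ⟨hprey, hpred⟩).1]
    ring

/-- Existence and uniqueness of the positive constant equilibrium of the
predator–prey system with fear effect and Beddington–DeAngelis response,
together with the relation `u = λ v + λ` where `λ = m / (c p - m q)`. -/
theorem stmt_0 (a c d k m p q r : ℝ)
    (ha : 0 < a) (hc : 0 < c) (hd : 0 < d) (hk : 0 < k) (hm : 0 < m)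
    (hp : 0 < p) (hq : 0 < q) (hr : 0 < r)
    (hcp : m * q < c * p)
    (hrd : d + a * (m / (c * p - m * q)) < r) :
    (∃! uv : ℝ × ℝ, 0 < uv.1 ∧ 0 < uv.2 ∧
      r / (1 + k * uv.2) - d - a * uv.1 - p * uv.2 / (1 + q * uv.1 + uv.2) = 0 ∧
      -m + c * p * uv.1 / (1 + q * uv.1 + uv.2) = 0) ∧
    (∀ u v : ℝ, 0 < u → 0 < v →
      r / (1 + k * v) - d - a * u - p * v / (1 + q * u + v) = 0 →
      -m + c * p * u / (1 + q * u + v) = 0 →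
      u = (m / (c * p - m * q)) * v + m / (c * p - m * q)) :=
  stmt_0_general a c d k m p q r ha hc hk hm hp hq hr hcp hrd
end

section
/- Let a, c, d, k, m, p, q, r be positive real numbers with r > d and m ≥ cp(r − d)/a. If u ≥ 0 and v ≥ 0 satisfy u·(r/(1 + k·v) − d − a·u − p·v/(1 + q·u + v)) = 0 and v·(−m + c·p·u/(1 + q·u + v)) = 0, then either (u, v) = (0, 0) or (u, v) = ((r − d)/a, 0). -/
/-!
Without predators (`v = 0`) the prey equation reduces to the logistic one, `u (r - d - a u) = 0`.
With predators (`v > 0`) the predator equation forces `c p u = m (1 + q u + v) > m`, while the prey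
equation bounds `a u ≤ r - d`, so `c p u ≤ c p (r - d) / a ≤ m`: a contradiction.
-/

lemma eq_zero_or_eq_div_of_mul_sub_mul_eq_zero {a b u : ℝ} (ha : a ≠ 0)
    (h : u * (b - a * u) = 0) : u = 0 ∨ u = b / a := by
  refine (mul_eq_zero.1 h).imp id fun h => ?_
  rw [eq_div_iff ha]
  linarith

lemma mul_le_sub_of_prey_growth_eq_zero {a d k p q r u v : ℝ} (hk : 0 ≤ k) (hp : 0 ≤ p)
    (hq : 0 ≤ q) (hr : 0 ≤ r) (hu : 0 ≤ u) (hv : 0 ≤ v)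
    (h : r / (1 + k * v) - d - a * u - p * v / (1 + q * u + v) = 0) : a * u ≤ r - d := by
  have hfear : r / (1 + k * v) ≤ r := div_le_self hr (by nlinarith)
  have hpred : 0 ≤ p * v / (1 + q * u + v) := by positivity
  linarith

theorem stmt_2_general (a c d k m p q r : ℝ)
    (ha : 0 < a) (hc : 0 < c) (hk : 0 < k) (hm : 0 < m)
    (hp : 0 < p) (hq : 0 < q) (hr : 0 < r)
    (hmge : c * p * (r - d) / a ≤ m)
    (u v : ℝ) (hu : 0 ≤ u) (hv : 0 ≤ v)
    (h1 : u * (r / (1 + k * v) - d - a * u - p * v / (1 + q * u + v)) = 0)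
    (h2 : v * (-m + c * p * u / (1 + q * u + v)) = 0) :
    (u = 0 ∧ v = 0) ∨ (u = (r - d) / a ∧ v = 0) := by
  rcases hv.eq_or_lt with rfl | hv0
  · have h1' : u * (r - d - a * u) = 0 := by simpa using h1
    exact (eq_zero_or_eq_div_of_mul_sub_mul_eq_zero ha.ne' h1').imp (⟨·, rfl⟩) (⟨·, rfl⟩)
  exfalso
  have hD : 1 < 1 + q * u + v := by nlinarith
  have hcpu : c * p * u = m * (1 + q * u + v) := by
    have h2' := (mul_eq_zero.1 h2).resolve_left hv0.ne'
    field_simp at h2'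
    linarith
  have hu0 : u ≠ 0 := by
    rintro rfl
    nlinarith
  have hau := mul_le_sub_of_prey_growth_eq_zero hk.le hp.le hq.le hr.le hu hv
    ((mul_eq_zero.1 h1).resolve_left hu0)
  have hcpu_le : c * p * u ≤ m :=
    calc c * p * u ≤ c * p * (r - d) / a := by
          rw [le_div_iff₀ ha]; nlinarith [mul_pos hc hp]
      _ ≤ m := hmge
  nlinarith

/-- If `r > d` and `m ≥ c p (r - d) / a`, the only nonnegative constant solutions of the
system are `(0,0)` and `((r-d)/a, 0)`. -/
theorem stmt_2 (a c d k m p q r : ℝ)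
    (ha : 0 < a) (hc : 0 < c) (hd : 0 < d) (hk : 0 < k) (hm : 0 < m)
    (hp : 0 < p) (hq : 0 < q) (hr : 0 < r)
    (hrd : d < r) (hmge : c * p * (r - d) / a ≤ m)
    (u v : ℝ) (hu : 0 ≤ u) (hv : 0 ≤ v)
    (h1 : u * (r / (1 + k * v) - d - a * u - p * v / (1 + q * u + v)) = 0)
    (h2 : v * (-m + c * p * u / (1 + q * u + v)) = 0) :
    (u = 0 ∧ v = 0) ∨ (u = (r - d) / a ∧ v = 0) :=
  stmt_2_general a c d k m p q r ha hc hk hm hp hq hr hmge u v hu hv h1 h2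
end
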